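/- With the same setup, an element x ∈ DK(Y)_n lies in N(DK(Y))_n = ∩_{i>0} ker(d_i : DK(Y)_n → DK(Y)_{n-1}) if and only if π_α(x) = 0 for every index α other than the identity ι_n : [n] → [n]. -/
import Mathlib


open CategoryTheory SimplexCategory

variable (Y : ℕ → Type) [∀ k, AddCommGroup (Y k)]

/-- Indices of the DK direct sum: injective order-preserving maps `[k] → [n]` with `α 0 = 0`. -/
def DKIdx (n : ℕ) : Type :=
  {p : Σ k : ℕ, SimplexCategory.mk k ⟶ SimplexCategory.mk n //
    Function.Injective p.2.toOrderHom ∧ p.2.toOrderHom 0 = 0}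

/-- The `n`-simplex abelian group `DK(Y)_n = ⊕_α Y_k`. -/
def DK (n : ℕ) : Type := ∀ p : DKIdx n, Y p.1.1

instance (n : ℕ) : AddCommGroup (DK Y n) :=
  inferInstanceAs (AddCommGroup (∀ p : DKIdx n, Y p.1.1))

/-- Projection `π_γ`, with the convention `π_γ = 0` for `γ` not injective (or not 0-preserving). -/
def DKproj {n l : ℕ} (γ : SimplexCategory.mk l ⟶ SimplexCategory.mk n) (x : DK Y n) : Y l :=
  if h : Function.Injective γ.toOrderHom ∧ γ.toOrderHom 0 = 0 then x ⟨⟨l, γ⟩, h⟩ else 0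

/-- Pullback `θ^*` along an order map, defined by `π_β θ^* = π_{θ∘β}`. -/
def DKpull {m n : ℕ} (θ : SimplexCategory.mk m ⟶ SimplexCategory.mk n) (x : DK Y n) : DK Y m :=
  fun p => DKproj Y (p.1.2 ≫ θ) x

/-- The map `θ' : [m+1] → [n+1]`, `θ'(0)=0`, `θ'(i+1)=θ(i)+1`, on monotone maps. -/
def primeFun {m n : ℕ} (θ : Fin (m + 1) →o Fin (n + 1)) : Fin (m + 2) →o Fin (n + 2) where
  toFun i := if h : (i : ℕ) = 0 then 0 else
    ⟨((θ ⟨(i : ℕ) - 1, by have := i.isLt; omega⟩ : Fin (n + 1)) : ℕ) + 1, by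
      have := (θ ⟨(i : ℕ) - 1, by have := i.isLt; omega⟩).isLt; omega⟩
  monotone' := by
    intro a b hab
    dsimp only
    by_cases ha : (a : ℕ) = 0
    · by_cases hb : (b : ℕ) = 0 <;> simp [ha, hb, Fin.le_def]
    · have hb : (b : ℕ) ≠ 0 := by have := Fin.le_def.mp hab; omega
      rw [dif_neg ha, dif_neg hb]
      have h2 : (⟨(a : ℕ) - 1, by have := a.isLt; omega⟩ : Fin (m + 1)) ≤
          ⟨(b : ℕ) - 1, by have := b.isLt; omega⟩ := by
        have := Fin.le_def.mp hab; simp [Fin.le_def]; omega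
      have := θ.monotone h2
      simp only [Fin.le_def] at this ⊢
      omega

/-- The map `θ' : [m+1] ⟶ [n+1]` in the simplex category. -/
def DKprime {m n : ℕ} (θ : SimplexCategory.mk m ⟶ SimplexCategory.mk n) :
    SimplexCategory.mk (m + 1) ⟶ SimplexCategory.mk (n + 1) :=
  SimplexCategory.mkHom (primeFun θ.toOrderHom)

/-- The zeroth face of `DK(Y)`:
`π_β d_0 = ∂ π_{β'} − Σ_{i=1}^{l+1} (−1)^i π_{β' δ_i}`. -/
def DKd0 (D : ∀ k, Y (k + 1) →+ Y k) {n : ℕ} (x : DK Y (n + 1)) : DK Y n :=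
  fun p =>
    D p.1.1 (DKproj Y (DKprime p.1.2) x) -
      ∑ j : Fin (p.1.1 + 1), ((-1 : ℤ) ^ ((j : ℕ) + 1)) •
        DKproj Y (SimplexCategory.δ j.succ ≫ DKprime p.1.2) x

/-- The degeneracy `u_j` of `DK(Y)`, `π_β u_j = π_{υ_j β}`. -/
def DKu {n : ℕ} (j : Fin (n + 1)) (x : DK Y n) : DK Y (n + 1) :=
  DKpull Y (SimplexCategory.σ j) x

/-- The subgroup spanned by the degenerate simplices. -/
def Dsub : ∀ n, AddSubgroup (DK Y n)
  | 0 => ⊥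
  | (n + 1) => AddSubgroup.closure (⋃ j : Fin (n + 1), Set.range (DKu Y j))

/-- The initial inclusion `σ_k : [k] → [n]`. -/
def initialIncl (k n : ℕ) (h : k ≤ n) : SimplexCategory.mk k ⟶ SimplexCategory.mk n :=
  SimplexCategory.mkHom
    ⟨fun i => ⟨(i : ℕ), by have := i.isLt; omega⟩,
     fun a b hab => by simp only [Fin.le_def] at hab ⊢; omega⟩

/-- The final inclusion `τ_k : [k] → [n]`, `i ↦ i + (n − k)`. -/
def finalIncl (k n : ℕ) (h : k ≤ n) : SimplexCategory.mk k ⟶ SimplexCategory.mk n :=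
  SimplexCategory.mkHom
    ⟨fun i => ⟨(i : ℕ) + (n - k), by have := i.isLt; omega⟩,
     fun a b hab => by simp only [Fin.le_def] at hab ⊢; omega⟩

/-- `x ∈ N(DK(Y))_n = ∩_{i>0} ker d_i` iff `π_α x = 0`
for every index `α` other than the identity `ι_n`. -/
theorem stmt3 (D : ∀ k, Y (k + 1) →+ Y k)
    (hD : ∀ (k : ℕ) (y : Y (k + 2)), D k (D (k + 1) y) = 0)
    (n : ℕ) (x : DK Y (n + 1)) :
    (∀ i : Fin (n + 1), DKpull Y (SimplexCategory.δ i.succ) x = 0) ↔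
      ∀ p : DKIdx (n + 1),
        p.1 ≠ ⟨n + 1, 𝟙 (SimplexCategory.mk (n + 1))⟩ → x p = 0 := by
  constructor
  · rintro H ⟨⟨k, α⟩, hinj, h0⟩ hne
    by_cases hsurj : Function.Surjective α.toOrderHom
    · exfalso
      have hk : k = n + 1 := by
        have h1 := Fintype.card_le_of_surjective _ hsurj
        have h2 := Fintype.card_le_of_injective _ hinj
        simp only [SimplexCategory.len_mk, Fintype.card_fin] at h1 h2
        omega
      subst hk
      have : Mono α := SimplexCategory.mono_iff_injective.mpr hinj
      exact hne (congrArg (Sigma.mk (n + 1)) (SimplexCategory.eq_id_of_mono α))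
    · obtain ⟨i, θ, hθ⟩ := SimplexCategory.eq_comp_δ_of_not_surjective α hsurj
      have happ : ∀ t, α.toOrderHom t = i.succAbove (θ.toOrderHom t) := by
        intro t
        rw [hθ]
        rfl
      have hi0 : i ≠ 0 := by
        intro h
        subst h
        have := happ 0
        rw [h0, Fin.zero_succAbove] at this
        exact (Fin.succ_ne_zero _) this.symm
      have hθinj : Function.Injective θ.toOrderHom := by
        intro a b hab
        apply hinj
        rw [happ, happ, hab]
      have hθ0 : θ.toOrderHom 0 = 0 := by
        apply Fin.succAbove_right_injective (p := i)
        rw [← happ 0, h0, Fin.succAbove_of_castSucc_lt]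
        · rfl
        · rw [Fin.castSucc_zero]
          exact Fin.pos_iff_ne_zero.mpr hi0
      have hcomp : θ ≫ SimplexCategory.δ ((i.pred hi0).succ) = α := by
        rw [Fin.succ_pred]
        exact hθ.symm
      have := congrFun (H (i.pred hi0)) ⟨⟨k, θ⟩, hθinj, hθ0⟩
      rw [show ((0 : DK Y (n + 1 - 1))) ⟨⟨k, θ⟩, hθinj, hθ0⟩ = 0 from rfl] at this
      unfold DKpull at this
      dsimp only at this
      rw [hcomp] at this
      unfold DKproj at this
      rwa [dif_pos ⟨hinj, h0⟩] at this
  · intro H i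
    funext q
    obtain ⟨⟨k, β⟩, hinj, h0⟩ := q
    show DKproj Y (β ≫ SimplexCategory.δ i.succ) x = 0
    have happ : ∀ t, (β ≫ SimplexCategory.δ i.succ).toOrderHom t
        = i.succ.succAbove (β.toOrderHom t) := fun t => rfl
    have hcinj : Function.Injective (β ≫ SimplexCategory.δ i.succ).toOrderHom := by
      intro a b hab
      rw [happ, happ] at hab
      exact hinj (Fin.succAbove_right_injective hab)
    have hc0 : (β ≫ SimplexCategory.δ i.succ).toOrderHom 0 = 0 := by
      rw [happ, h0, Fin.succAbove_of_castSucc_lt]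
      · rfl
      · exact Fin.succ_pos i
    unfold DKproj
    rw [dif_pos ⟨hcinj, hc0⟩]
    apply H
    intro h
    have hk : k ≤ n := by
      have h2 := Fintype.card_le_of_injective _ hinj
      simp only [SimplexCategory.len_mk, Fintype.card_fin] at h2
      omega
    have := congrArg Sigma.fst h
    simp only at this
    omega
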